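/- For a continuous map f on a compact metric space and any m ≥ 1, h_pol(f^m) = h_pol(f). -/

import Mathlib

/-!
The orbit of `f^m` samples the orbit of `f` at multiples of `m`, so `d_n^{f^m} ≤ d_{mn}^f`
and `G_n^{f^m}(ε) ≤ G_{mn}^f(ε)`; as `log (m n) / log n → 1`, this gives
`h_pol(f^m) ≤ h_pol(f)`. Conversely, uniform continuity of `f, …, f^{m-1}` yields `δ > 0` with
`d(x, y) < δ ⇒ d_m^f(x, y) < ε`, so `d_n^{f^m}(x, y) < δ` forces `d_{mn}^f(x, y) < ε`;
hence `G_n^f(ε) ≤ G_n^{f^m}(δ)` and `h_pol(f) ≤ h_pol(f^m)`.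
-/

open Set Filter Metric

/-- The dynamical metric `d_n^f(x,y) = max_{0 ≤ k ≤ n-1} d(f^k x, f^k y)`. -/
noncomputable def dynDist {X : Type*} [PseudoMetricSpace X] (f : X → X) (n : ℕ) (x y : X) : ℝ :=
  (((Finset.range n).sup fun k => nndist (f^[k] x) (f^[k] y)) : NNReal)

/-- `G_n^f(ε)`: the minimal number of `d_n^f`-balls of radius `ε` covering the space. -/
noncomputable def coverNum {X : Type*} [PseudoMetricSpace X] (f : X → X) (n : ℕ) (ε : ℝ) : ℕ :=
  sInf {m : ℕ | ∃ s : Finset X, s.card = m ∧ ∀ x : X, ∃ c ∈ s, dynDist f n c x < ε}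

/-- The strong polynomial entropy `h_pol(f) = sup_{ε>0} limsup_n log G_n^f(ε) / log n`. -/
noncomputable def hpol {X : Type*} [PseudoMetricSpace X] (f : X → X) : ENNReal :=
  ⨆ ε : {e : ℝ // 0 < e},
    Filter.limsup
      (fun n : ℕ => ENNReal.ofReal (Real.log (coverNum f n (ε : ℝ)) / Real.log n))
      Filter.atTop

/-- A covering of `X` by dynamical balls `B_{n_i}^f(x_i, ε)` with all orders `n_i ≥ N`. -/
def IsDynCover {X : Type*} [PseudoMetricSpace X] (f : X → X) (ε : ℝ) (N : ℕ)
    (C : Set (X × ℕ)) : Prop :=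
  (∀ p ∈ C, N ≤ p.2) ∧ ∀ x : X, ∃ p ∈ C, dynDist f p.2 p.1 x < ε

/-- The weight `M(C,s) = Σ_i n_i^{-s}` of a covering by dynamical balls. -/
noncomputable def covWeight {X : Type*} (C : Set (X × ℕ)) (s : ℝ) : ENNReal :=
  ∑' p : C, ((p : X × ℕ).2 : ENNReal) ^ (-s)

/-- `Δ^f(ε,s) = sup_{N ≥ 1} inf { M(C,s) | C a covering by dynamical balls of orders ≥ N }`. -/
noncomputable def dynDelta {X : Type*} [PseudoMetricSpace X] (f : X → X) (ε s : ℝ) : ENNReal :=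
  ⨆ N : ℕ, ⨅ C : {C : Set (X × ℕ) // IsDynCover f ε (N + 1) C}, covWeight (C : Set (X × ℕ)) s

/-- The critical exponent `s_c^f(ε)`, i.e. the supremum of the `s ≥ 0` with `Δ^f(ε,s) = ∞`. -/
noncomputable def scrit {X : Type*} [PseudoMetricSpace X] (f : X → X) (ε : ℝ) : ENNReal :=
  sSup {x : ENNReal | ∃ s : ℝ, 0 ≤ s ∧ x = ENNReal.ofReal s ∧ dynDelta f ε s = ⊤}

/-- The weak polynomial entropy `h_pol^*(f) = sup_{ε>0} s_c^f(ε)`. -/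
noncomputable def hpolStar {X : Type*} [PseudoMetricSpace X] (f : X → X) : ENNReal :=
  ⨆ ε : {e : ℝ // 0 < e}, scrit f (ε : ℝ)

open Topology

section DynamicalCovers

variable {X : Type*} [PseudoMetricSpace X]

lemma dynDist_self (f : X → X) (n : ℕ) (x : X) : dynDist f n x x = 0 := by
  simp [dynDist]

lemma dynDist_lt_iff (f : X → X) (n : ℕ) (x y : X) {ε : ℝ} (hε : 0 < ε) :
    dynDist f n x y < ε ↔ ∀ k < n, dist (f^[k] x) (f^[k] y) < ε := by
  lift ε to NNReal using hε.le
  simp only [dynDist, ← coe_nndist, NNReal.coe_lt_coe, Finset.sup_lt_iff (show ⊥ < ε from hε),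
    Finset.mem_range]

lemma dynDist_mono {f : X → X} {n n' : ℕ} (h : n ≤ n') (x y : X) :
    dynDist f n x y ≤ dynDist f n' x y :=
  NNReal.coe_le_coe.mpr <| Finset.sup_mono (Finset.range_subset_range.mpr h)

lemma dynDist_iterate_le (f : X → X) {m : ℕ} (hm : 0 < m) (n : ℕ) (x y : X) :
    dynDist (f^[m]) n x y ≤ dynDist f (m * n) x y := by
  refine NNReal.coe_le_coe.mpr <| Finset.sup_le fun k hk => ?_
  have hmk : m * k ∈ Finset.range (m * n) :=
    Finset.mem_range.mpr (Nat.mul_lt_mul_of_pos_left (Finset.mem_range.mp hk) hm)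
  simpa only [Function.iterate_mul] using
    Finset.le_sup (f := fun k => nndist (f^[k] x) (f^[k] y)) hmk

lemma dynDist_lt_of_dynDist_iterate_lt {f : X → X} {m : ℕ} {ε δ : ℝ}
    (hε : 0 < ε) (hδ : 0 < δ)
    (hfδ : ∀ x y : X, dist x y < δ → ∀ j < m, dist (f^[j] x) (f^[j] y) < ε)
    {n : ℕ} {x y : X} (h : dynDist (f^[m]) n x y < δ) : dynDist f (m * n) x y < ε := by
  rw [dynDist_lt_iff _ _ _ _ hδ] at h
  rw [dynDist_lt_iff _ _ _ _ hε]
  intro k hk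
  have hm : 0 < m := Nat.pos_of_mul_pos_right (hk.trans_le' (Nat.zero_le k))
  have hsplit : ∀ z : X, f^[k] z = f^[k % m] (f^[m * (k / m)] z) := fun z => by
    rw [← Function.iterate_add_apply, Nat.mod_add_div]
  rw [hsplit, hsplit]
  refine hfδ _ _ ?_ _ (Nat.mod_lt k hm)
  simpa only [Function.iterate_mul] using h (k / m) (Nat.div_lt_of_lt_mul hk)

lemma coverNum_le_card {f : X → X} {n : ℕ} {ε : ℝ} (s : Finset X)
    (hs : ∀ x : X, ∃ c ∈ s, dynDist f n c x < ε) : coverNum f n ε ≤ s.card :=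
  Nat.sInf_le ⟨s, rfl, hs⟩

lemma coverNum_le_coverNum {f g : X → X} {n n' : ℕ} {ε δ : ℝ}
    (hg : ∃ s : Finset X, ∀ x : X, ∃ c ∈ s, dynDist g n' c x < δ)
    (h : ∀ c x : X, dynDist g n' c x < δ → dynDist f n c x < ε) :
    coverNum f n ε ≤ coverNum g n' δ := by
  obtain ⟨s₀, hs₀⟩ := hg
  obtain ⟨s, hs, hcov⟩ := Nat.sInf_mem (s := {k | ∃ s : Finset X, s.card = k ∧
    ∀ x : X, ∃ c ∈ s, dynDist g n' c x < δ}) ⟨s₀.card, s₀, rfl, hs₀⟩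
  refine (coverNum_le_card s fun x => ?_).trans_eq hs
  obtain ⟨c, hc, hcx⟩ := hcov x
  exact ⟨c, hc, h c x hcx⟩

lemma continuous_dynDist {f : X → X} (hf : Continuous f) (n : ℕ) (c : X) :
    Continuous (dynDist f n c) :=
  NNReal.continuous_coe.comp <|
    Continuous.finset_sup_apply fun k _ => continuous_const.nndist (hf.iterate k)

end DynamicalCovers

section Compact

variable {X : Type*} [PseudoMetricSpace X] [CompactSpace X]

lemma exists_finset_dynDist_lt {f : X → X} (hf : Continuous f) (n : ℕ) {ε : ℝ}
    (hε : 0 < ε) :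
    ∃ s : Finset X, ∀ x : X, ∃ c ∈ s, dynDist f n c x < ε := by
  have hopen : ∀ c : X, IsOpen {x | dynDist f n c x < ε} := fun c =>
    isOpen_lt (continuous_dynDist hf n c) continuous_const
  obtain ⟨s, hs⟩ := isCompact_univ.elim_finite_subcover _ hopen fun x _ =>
    mem_iUnion.mpr ⟨x, by simpa [dynDist_self] using hε⟩
  exact ⟨s, fun x => by simpa using hs (mem_univ x)⟩

lemma exists_pos_forall_iterate_dist_lt {f : X → X} (hf : Continuous f) (m : ℕ) {ε : ℝ}
    (hε : 0 < ε) :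
    ∃ δ > 0, ∀ x y : X, dist x y < δ → ∀ j < m, dist (f^[j] x) (f^[j] y) < ε := by
  have hu : UniformContinuous fun x (j : Fin m) => f^[j] x :=
    CompactSpace.uniformContinuous_of_continuous (continuous_pi fun j => hf.iterate j)
  obtain ⟨δ, hδ, h⟩ := Metric.uniformContinuous_iff.mp hu ε hε
  exact ⟨δ, hδ, fun x y hxy j hj => (dist_pi_lt_iff hε).mp (h hxy) ⟨j, hj⟩⟩

end Compact

lemma ofReal_log_div_log_le_of_le {a b : ℕ} (n : ℕ) (h : a ≤ b) :
    ENNReal.ofReal (Real.log a / Real.log n) ≤ ENNReal.ofReal (Real.log b / Real.log n) := by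
  refine ENNReal.ofReal_le_ofReal (div_le_div_of_nonneg_right ?_ (Real.log_natCast_nonneg n))
  rcases Nat.eq_zero_or_pos a with rfl | ha
  · simpa using Real.log_natCast_nonneg b
  · exact Real.log_le_log (by exact_mod_cast ha) (by exact_mod_cast h)

lemma tendsto_log_mul_div_log {m : ℕ} (hm : 0 < m) :
    Tendsto (fun n : ℕ => Real.log ((m * n : ℕ) : ℝ) / Real.log n) atTop (𝓝 1) := by
  have hlog : Tendsto (fun n : ℕ => Real.log n) atTop atTop :=
    Real.tendsto_log_atTop.comp tendsto_natCast_atTop_atTop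
  have hlim : Tendsto (fun n : ℕ => Real.log m / Real.log n + 1) atTop (𝓝 1) := by
    simpa using (tendsto_const_nhds.div_atTop hlog).add_const 1
  refine hlim.congr' ?_
  filter_upwards [hlog.eventually_gt_atTop 0] with n hn
  have hn0 : (n : ℝ) ≠ 0 := by rintro h; simp [h] at hn
  rw [Nat.cast_mul, Real.log_mul (by exact_mod_cast hm.ne') hn0]
  field_simp

lemma limsup_ofReal_div_log_comp_mul_le (a : ℕ → ℝ) {m : ℕ} (hm : 0 < m) :
    limsup (fun n : ℕ => ENNReal.ofReal (a (m * n) / Real.log n)) atTop ≤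
      limsup (fun n : ℕ => ENNReal.ofReal (a n / Real.log n)) atTop := by
  set u : ℕ → ENNReal := fun n => ENNReal.ofReal (a n / Real.log n)
  set v : ℕ → ENNReal := fun n => ENNReal.ofReal (Real.log ((m * n : ℕ) : ℝ) / Real.log n)
  have hv : limsup v atTop = 1 := by
    simpa only [ENNReal.ofReal_one] using
      (ENNReal.tendsto_ofReal (tendsto_log_mul_div_log hm)).limsup_eq
  have hsplit : (fun n : ℕ => ENNReal.ofReal (a (m * n) / Real.log n)) =ᶠ[atTop]
      (u ∘ (m * ·)) * v := by
    filter_upwards [eventually_ge_atTop 2] with n hn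
    have hmn : 1 < ((m * n : ℕ) : ℝ) := by norm_cast; nlinarith
    simp only [Pi.mul_apply, Function.comp_apply, u, v]
    rw [← ENNReal.ofReal_mul' (div_nonneg (Real.log_natCast_nonneg _)
      (Real.log_natCast_nonneg _)), div_mul_div_cancel₀ (Real.log_pos hmn).ne']
  calc limsup (fun n : ℕ => ENNReal.ofReal (a (m * n) / Real.log n)) atTop
      = limsup ((u ∘ (m * ·)) * v) atTop := limsup_congr hsplit
    _ ≤ limsup (u ∘ (m * ·)) atTop * limsup v atTop :=
      ENNReal.limsup_mul_le' (by simp [hv]) (by simp [hv])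
    _ = limsup (u ∘ (m * ·)) atTop := by rw [hv, mul_one]
    _ ≤ limsup u atTop := (tendsto_id.const_mul_atTop' hm).limsup_comp_le_limsup

section PolynomialEntropy

variable {X : Type*} [PseudoMetricSpace X]

lemma hpol_le_hpol_of_coverNum_le {f g : X → X}
    (h : ∀ ε > 0, ∃ δ > 0, ∀ n, coverNum f n ε ≤ coverNum g n δ) :
    hpol f ≤ hpol g := by
  refine iSup_le fun ε => ?_
  obtain ⟨δ, hδ, hle⟩ := h ε ε.2
  refine le_trans ?_ (le_iSup _ (⟨δ, hδ⟩ : {e : ℝ // 0 < e}))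
  exact limsup_le_limsup (Eventually.of_forall fun n => ofReal_log_div_log_le_of_le n (hle n))

variable [CompactSpace X] {f : X → X}

lemma hpol_le_hpol_iterate (hf : Continuous f) {m : ℕ} (hm : 0 < m) :
    hpol f ≤ hpol (f^[m]) := by
  refine hpol_le_hpol_of_coverNum_le fun ε hε => ?_
  obtain ⟨δ, hδ, hfδ⟩ := exists_pos_forall_iterate_dist_lt hf m hε
  refine ⟨δ, hδ, fun n => coverNum_le_coverNum (exists_finset_dynDist_lt (hf.iterate m) n hδ)
    fun c x hcx => (dynDist_mono (Nat.le_mul_of_pos_left n hm) c x).trans_lt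
      (dynDist_lt_of_dynDist_iterate_lt hε hδ hfδ hcx)⟩

lemma hpol_iterate_le_hpol (hf : Continuous f) {m : ℕ} (hm : 0 < m) :
    hpol (f^[m]) ≤ hpol f := by
  refine iSup_mono fun ε => ?_
  have hcover : ∀ n, coverNum (f^[m]) n ε ≤ coverNum f (m * n) ε := fun n =>
    coverNum_le_coverNum (exists_finset_dynDist_lt hf (m * n) ε.2)
      fun c x hcx => (dynDist_iterate_le f hm n c x).trans_lt hcx
  calc limsup (fun n : ℕ => ENNReal.ofReal (Real.log (coverNum (f^[m]) n ε) / Real.log n))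
        atTop
      ≤ limsup (fun n : ℕ => ENNReal.ofReal (Real.log (coverNum f (m * n) ε) / Real.log n))
          atTop :=
        limsup_le_limsup <| Eventually.of_forall fun n =>
          ofReal_log_div_log_le_of_le n (hcover n)
    _ ≤ _ := limsup_ofReal_div_log_comp_mul_le (fun n => Real.log (coverNum f n ε)) hm

end PolynomialEntropy

/-- For a continuous map on a compact metric space and any `m ≥ 1`, `h_pol(f^m) = h_pol(f)`. -/
theorem stmt5 {X : Type*} [MetricSpace X] [CompactSpace X] (f : X → X) (hf : Continuous f)
    (m : ℕ) (hm : 1 ≤ m) :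
    hpol (f^[m]) = hpol f :=
  (hpol_iterate_le_hpol hf hm).antisymm (hpol_le_hpol_iterate hf hm)
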